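/- arXiv:0812.1962 — 2 statements merged into one kernel-verified Lean document; each statement's English description precedes it below -/
import Mathlib

section
/- For every r ≥ 0, the probability vector π = (1/(16+5r), (3+r)/(16+5r), (9+3r)/(16+5r), (3+r)/(16+5r)) on states (CG, C̄G, C̄Ḡ, CḠ) satisfies πQ = 0, where Q = [[-(6+2r), 3+r, 0, 3+r],[1,-4,3,0],[0,1,-2,1],[1,0,3,-4]]. In particular π is a stationary distribution of the continuous-time Markov chain with rate matrix Q. -/
open Matrix Finset

/-- Rate matrix of the dinucleotide encoding {C,C̄}×{G,Ḡ} in the JC+CpG model,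
states ordered (CG, C̄G, C̄Ḡ, CḠ). -/
def Qmat (r : ℝ) : Matrix (Fin 4) (Fin 4) ℝ :=
  !![-(6+2*r), 3+r, 0, 3+r;
     1, -4, 3, 0;
     0, 1, -2, 1;
     1, 0, 3, -4]

/-- Stationary distribution on (CG, C̄G, C̄Ḡ, CḠ). -/
noncomputable def piv (r : ℝ) : Fin 4 → ℝ :=
  ![1/(16+5*r), (3+r)/(16+5*r), (9+3*r)/(16+5*r), (3+r)/(16+5*r)]

theorem stmt1 (r : ℝ) (hr : 0 ≤ r) (j : Fin 4) :
    ∑ i, piv r i * Qmat r i j = 0 := by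
  have h : (16+5*r) ≠ 0 := by nlinarith
  fin_cases j <;>
    simp [piv, Qmat, Fin.sum_univ_four, Matrix.cons_val_zero, Matrix.cons_val_one] <;>
    field_simp <;> ring
end

section
/- For every r ≥ 0, setting u = √(4+2r+r²), u₊ = 6+r+u, u₋ = 6+r−u, the numbers 0, −4, −u₊, −u₋ are exactly the eigenvalues of the matrix Q = [[-(6+2r), 3+r, 0, 3+r],[1,-4,3,0],[0,1,-2,1],[1,0,3,-4]]; equivalently, the characteristic polynomial of Q is λ(λ+4)(λ+u₊)(λ+u₋). -/
open Matrix Polynomial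

theorem charmatrix_Qmat (r : ℝ) :
    (Qmat r).charmatrix =
      !![X + C (6+2*r), -C (3+r), 0, -C (3+r);
         -1, X + C 4, -C 3, 0;
         0, -1, X + C 2, -1;
         -1, 0, -C 3, X + C 4] := by
  ext i j : 1
  fin_cases i <;> fin_cases j <;> simp [Qmat]
  ring

theorem charpoly_Qmat (r : ℝ) :
    (Qmat r).charpoly = X * (X + C 4) * (X ^ 2 + C (12 + 2*r) * X + C (32 + 10*r)) := by
  rw [Matrix.charpoly, charmatrix_Qmat]
  simp [Matrix.det_succ_row_zero, Fin.sum_univ_succ, Fin.succAbove, Fin.castSucc,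
    Fin.castAdd, Fin.castLE]
  simp only [map_ofNat]
  ring

theorem Polynomial.X_add_C_add_mul_X_add_C_sub {R : Type*} [CommRing R] (a u : R) :
    (X + C (a + u)) * (X + C (a - u)) = X ^ 2 + C (2 * a) * X + C (a ^ 2 - u ^ 2) := by
  simp only [map_add, map_sub, map_mul, map_pow, map_ofNat]
  ring

theorem stmt4_general (r : ℝ) :
    (Qmat r).charpoly =
      X * (X + C 4) * (X + C (6 + r + Real.sqrt (4 + 2*r + r^2)))
        * (X + C (6 + r - Real.sqrt (4 + 2*r + r^2))) := by
  have hu : Real.sqrt (4 + 2*r + r^2) ^ 2 = 4 + 2*r + r^2 :=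
    Real.sq_sqrt (by nlinarith [sq_nonneg (r + 1)])
  rw [charpoly_Qmat, mul_assoc (X * (X + C 4)), X_add_C_add_mul_X_add_C_sub, hu,
    show 2 * (6 + r) = 12 + 2*r by ring, show (6 + r) ^ 2 - (4 + 2*r + r^2) = 32 + 10*r by ring]

/-- The characteristic polynomial of Q factors as λ(λ+4)(λ+u₊)(λ+u₋), so that
0, −4, −u₊, −u₋ are exactly the eigenvalues of Q. -/
theorem stmt4 (r : ℝ) (hr : 0 ≤ r) :
    (Qmat r).charpoly =
      X * (X + C 4) * (X + C (6 + r + Real.sqrt (4 + 2*r + r^2)))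
        * (X + C (6 + r - Real.sqrt (4 + 2*r + r^2))) :=
  stmt4_general r
end
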